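/- If R is an fppf-local ring, then for every prime ideal 𝔭 ⊂ R the localization R_𝔭 is a henselian local ring with algebraically closed residue field. -/

import Mathlib

universe u

/-- A commutative ring is *fppf-local* if it is local and every faithfully flat
ring homomorphism of finite presentation out of it admits a retraction. -/
def FppfLocal (R : Type u) [CommRing R] : Prop :=
  IsLocalRing R ∧
    ∀ (B : Type u) [CommRing B] (f : R →+* B),
      f.FinitePresentation →
      (letI : Algebra R B := f.toAlgebra; Module.FaithfullyFlat R B) →
      ∃ g : B →+* R, g.comp f = RingHom.id R

/-- A commutative ring is *absolutely integrally closed* (AIC) if every monic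
polynomial over it has a root. -/
def IsAIC (R : Type*) [CommRing R] : Prop :=
  ∀ f : Polynomial R, f.Monic → ∃ x : R, f.IsRoot x

/-
For monic `f` of positive degree, `R → R[X]/(f)` is finite free and finitely presented, hence
fppf, so over an fppf-local ring a retraction sends the class of `X` to a root of `f`: every monic
polynomial splits. This passes to localizations (scale the roots to clear denominators) and to
quotients. In a local ring over which monic `f` splits into linear factors `X - aᵢ`, a root of `f`
modulo the maximal ideal is congruent to some `aᵢ`, which is Henselianity; over the residue field
it is algebraic closedness.
-/

open Polynomial

-- `IsAIC` also asks for a root of the monic polynomial `1`, which only the zero ring has.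
def IsAbsolutelyIntegrallyClosed (R : Type*) [CommRing R] : Prop :=
  ∀ f : R[X], f.Monic → f.Splits

theorem Polynomial.Monic.splits_of_forall_exists_isRoot {R : Type*} [CommRing R]
    (h : ∀ g : R[X], g.Monic → 0 < g.natDegree → ∃ x, g.IsRoot x) {f : R[X]} (hf : f.Monic) :
    f.Splits := by
  cases subsingleton_or_nontrivial R
  · exact Splits.of_natDegree_eq_zero natDegree_of_subsingleton
  induction hn : f.natDegree generalizing f with
  | zero => exact Splits.of_natDegree_eq_zero hn
  | succ n ih =>
    obtain ⟨a, ha⟩ := h f hf (by omega)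
    obtain ⟨q, rfl⟩ := dvd_iff_isRoot.mpr ha
    have hq : q.Monic := (monic_X_sub_C a).of_mul_monic_left hf
    rw [(monic_X_sub_C a).natDegree_mul hq, natDegree_X_sub_C] at hn
    exact (Splits.X_sub_C a).mul (ih hq (by omega))

theorem Polynomial.Splits.exists_isRoot_sub_mem_of_eval_mem {R : Type*} [CommRing R]
    {f : R[X]} (hs : f.Splits) (hf : f.Monic) {P : Ideal R} [P.IsPrime] {a₀ : R}
    (ha₀ : f.eval a₀ ∈ P) : ∃ a, f.IsRoot a ∧ a - a₀ ∈ P := by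
  obtain ⟨m, hm⟩ := splits_iff_exists_multiset.mp hs
  rw [hf.leadingCoeff, C_1, one_mul] at hm
  rw [hm, eval_multiset_prod, Multiset.map_map,
    (‹P.IsPrime›).multiset_prod_mem_iff_exists_mem] at ha₀
  obtain ⟨_, hmem, ha₀⟩ := ha₀
  obtain ⟨a, ha, rfl⟩ := Multiset.mem_map.mp hmem
  refine ⟨a, ?_, by simpa using P.neg_mem ha₀⟩
  rw [IsRoot, hm, eval_multiset_prod, Multiset.map_map]
  exact Multiset.prod_eq_zero (Multiset.mem_map.mpr ⟨a, ha, by simp⟩)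

namespace IsAbsolutelyIntegrallyClosed

variable {R : Type*} [CommRing R]

theorem of_surjective (h : IsAbsolutelyIntegrallyClosed R) {S : Type*} [CommRing S] (φ : R →+* S)
    (hφ : Function.Surjective φ) : IsAbsolutelyIntegrallyClosed S := fun f hf => by
  obtain ⟨g, rfl, -, hg⟩ := lifts_and_natDegree_eq_and_monic (mem_lifts_of_surjective hφ f) hf
  exact (h g hg).map φ

theorem isLocalization (h : IsAbsolutelyIntegrallyClosed R) (M : Submonoid R) (S : Type*)
    [CommRing S] [Algebra R S] [IsLocalization M S] : IsAbsolutelyIntegrallyClosed S := fun f hf => by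
  have hs : IsUnit (algebraMap R S (IsLocalization.commonDenom M f.support f.coeff)) :=
    IsLocalization.map_units S _
  obtain ⟨g, hg, -, hgm⟩ := lifts_and_natDegree_eq_and_monic
    (IsLocalization.scaleRoots_commonDenom_mem_lifts M f (by simp [hf.leadingCoeff]))
    ((monic_scaleRoots_iff _).mpr hf)
  have := ((h g hgm).map (algebraMap R S)).scaleRoots (↑hs.unit⁻¹ : S)
  rwa [hg, ← scaleRoots_mul, hs.mul_val_inv, scaleRoots_one] at this

theorem isAlgClosed {k : Type*} [Field k] (h : IsAbsolutelyIntegrallyClosed k) : IsAlgClosed k :=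
  IsAlgClosed.of_exists_root k fun p hp hirr =>
    (h p hp).exists_eval_eq_zero (natDegree_pos_iff_degree_pos.mp hirr.natDegree_pos).ne'

theorem henselianLocalRing [IsLocalRing R] (h : IsAbsolutelyIntegrallyClosed R) :
    HenselianLocalRing R where
  is_henselian f hf _ ha₀ _ := (h f hf).exists_isRoot_sub_mem_of_eval_mem hf ha₀

end IsAbsolutelyIntegrallyClosed

namespace FppfLocal

variable {R : Type u} [CommRing R]

theorem nonempty_algHom (hR : FppfLocal R) (B : Type u) [CommRing B] [Algebra R B]
    [Algebra.FinitePresentation R B] [Module.FaithfullyFlat R B] : Nonempty (B →ₐ[R] R) := by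
  obtain ⟨g, hg⟩ := hR.2 B (algebraMap R B)
    (by rwa [RingHom.FinitePresentation, toAlgebra_algebraMap]) (by rwa [toAlgebra_algebraMap])
  exact ⟨{ g with commutes' := RingHom.congr_fun hg }⟩

theorem exists_isRoot (hR : FppfLocal R) {f : R[X]} (hf : f.Monic) (hdeg : 0 < f.natDegree) :
    ∃ x, f.IsRoot x := by
  have := hR.1
  have := hf.free_adjoinRoot
  have : Nontrivial (AdjoinRoot f) := Ideal.Quotient.nontrivial_iff.mpr (by
    rw [Ne, Ideal.span_singleton_eq_top, hf.isUnit_iff]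
    rintro rfl
    simp at hdeg)
  obtain ⟨g⟩ := hR.nonempty_algHom (AdjoinRoot f)
  refine ⟨g (AdjoinRoot.root f), ?_⟩
  rw [IsRoot, ← coe_aeval_eq_eval, aeval_algHom_apply, AdjoinRoot.aeval_eq, AdjoinRoot.mk_self,
    map_zero]

theorem isAbsolutelyIntegrallyClosed (hR : FppfLocal R) : IsAbsolutelyIntegrallyClosed R :=
  fun _ hf => hf.splits_of_forall_exists_isRoot fun _ => hR.exists_isRoot

end FppfLocal

theorem fppfLocal_localization_strictlyLocal (R : Type u) [CommRing R]
    (hR : FppfLocal R) (p : Ideal R) [p.IsPrime] :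
    HenselianLocalRing (Localization.AtPrime p) ∧
    IsAlgClosed (IsLocalRing.ResidueField (Localization.AtPrime p)) := by
  have h := hR.isAbsolutelyIntegrallyClosed.isLocalization p.primeCompl (Localization.AtPrime p)
  exact ⟨h.henselianLocalRing,
    (h.of_surjective _ IsLocalRing.residue_surjective).isAlgClosed⟩
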